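/- Let G be a connected finite simple undirected graph on N ≥ 2 vertices with adjacency matrix A and Perron eigenvector p_1 (the entrywise positive unit eigenvector associated with the largest eigenvalue λ_1). For β → ∞ the ranking obtained by subgraph centrality tends to the eigenvector centrality ranking: for any two vertices v_i, v_j with p_1(i) > p_1(j), there exists B > 0 such that for all β > B one has [e^{βA}]_{ii} > [e^{βA}]_{jj}. -/

import Mathlib

/-!
Diagonalising the symmetric matrix `A` gives `[e^{βA}]ᵢᵢ = ∑ₖ e^{βμₖ} vₖ(i)²`. As every eigenvalue
is at most `λ₁`, `e^{-βλ₁} [e^{βA}]ᵢᵢ` tends to the sum of `vₖ(i)²` over the `k` with `μₖ = λ₁`.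
For a connected graph the `λ₁`-eigenspace is spanned by the positive vector `p₁`: for another
eigenvector `w` and `c = min (w / p₁)`, `w - c p₁` is a nonnegative eigenvector with a zero, and
`(A u)ₜ = ∑_{s ~ t} u(s)` spreads that zero along edges. So the limit is `p₁(i)²`, and
`e^{-βλ₁} ([e^{βA}]ᵢᵢ - [e^{βA}]ⱼⱼ) → p₁(i)² - p₁(j)² > 0`.
-/

open Matrix Filter Topology

namespace SimpleGraph

variable {V : Type*} [Fintype V] {G : SimpleGraph V} [DecidableRel G.Adj]

theorem Connected.eq_zero_of_adjMatrix_mulVec_eq_smul (hconn : G.Connected) {lam : ℝ}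
    {u : V → ℝ} (hu : G.adjMatrix ℝ *ᵥ u = lam • u) (hnonneg : 0 ≤ u) {t₀ : V} (ht₀ : u t₀ = 0) :
    u = 0 := by
  have hstep : ∀ t s, G.Adj t s → u t = 0 → u s = 0 := by
    intro t s hts ht
    have hsum : ∑ r ∈ G.neighborFinset t, u r = 0 := by
      rw [← adjMatrix_mulVec_apply, hu, Pi.smul_apply, ht, smul_zero]
    exact (Finset.sum_eq_zero_iff_of_nonneg fun r _ => hnonneg r).1 hsum s (by simpa using hts)
  have hwalk : ∀ a b (w : G.Walk a b), u a = 0 → u b = 0 := by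
    intro a b w
    induction w with
    | nil => exact id
    | cons h _ ih => exact fun ha => ih (hstep _ _ h ha)
  funext t
  exact (hconn t₀ t).elim fun w => hwalk _ _ w ht₀

theorem Connected.exists_eq_smul_of_adjMatrix_mulVec_eq_smul (hconn : G.Connected) {lam : ℝ}
    {p w : V → ℝ} (hp : G.adjMatrix ℝ *ᵥ p = lam • p) (hpos : ∀ t, 0 < p t)
    (hw : G.adjMatrix ℝ *ᵥ w = lam • w) : ∃ c : ℝ, w = c • p := by
  have := hconn.nonempty
  obtain ⟨t₀, -, hmin⟩ :=
    Finset.exists_min_image Finset.univ (fun t => w t / p t) Finset.univ_nonempty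
  set c := w t₀ / p t₀
  refine ⟨c, sub_eq_zero.1
    (hconn.eq_zero_of_adjMatrix_mulVec_eq_smul (lam := lam) (t₀ := t₀) ?_ ?_ ?_)⟩
  · rw [mulVec_sub, mulVec_smul, hw, hp, smul_sub, smul_comm]
  · intro t
    have := (le_div_iff₀ (hpos t)).1 (hmin t (Finset.mem_univ t))
    simpa using this
  · simp [c, (hpos t₀).ne']

end SimpleGraph

namespace Matrix.IsHermitian

variable {n : Type*} [Fintype n] [DecidableEq n] {A : Matrix n n ℝ} (hA : A.IsHermitian)

theorem exp_smul_apply_self (β : ℝ) (i : n) :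
    NormedSpace.exp (β • A) i i =
      ∑ k, Real.exp (β * hA.eigenvalues k) * hA.eigenvectorBasis k i ^ 2 := by
  set U : Matrix n n ℝ := (hA.eigenvectorUnitary : Matrix n n ℝ)
  have hUinv : U⁻¹ = star U := inv_eq_right_inv (Unitary.coe_mul_star_self _)
  have hU : IsUnit U := (Unitary.toUnits hA.eigenvectorUnitary).isUnit
  have hβA : β • A = U * diagonal (β • hA.eigenvalues) * U⁻¹ := by
    conv_lhs => rw [hA.spectral_theorem]
    rw [diagonal_smul, mul_smul_comm, smul_mul_assoc, hUinv]
    simp [U]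
  rw [hβA, exp_conj _ _ hU, exp_diagonal, hUinv, mul_apply]
  refine Finset.sum_congr rfl fun k _ => ?_
  simp [U, mul_diagonal, Pi.exp_def, Real.exp_eq_exp_ℝ, sq]
  ring

theorem tendsto_exp_neg_mul_exp_smul_apply_self {lam : ℝ} (hle : ∀ k, hA.eigenvalues k ≤ lam)
    (i : n) :
    Tendsto (fun β : ℝ => Real.exp (-(β * lam)) * NormedSpace.exp (β • A) i i) atTop
      (𝓝 (∑ k with hA.eigenvalues k = lam, hA.eigenvectorBasis k i ^ 2)) := by
  have hexp (β : ℝ) (k : n) :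
      Real.exp (-(β * lam)) * Real.exp (β * hA.eigenvalues k) =
        Real.exp (β * (hA.eigenvalues k - lam)) := by
    rw [← Real.exp_add]; ring_nf
  simp_rw [hA.exp_smul_apply_self, Finset.mul_sum, ← mul_assoc, hexp, Finset.sum_filter]
  refine tendsto_finsetSum _ fun k _ => ?_
  split_ifs with hk
  · simp [hk]
  · have hneg : hA.eigenvalues k - lam < 0 := sub_neg.2 ((hle k).lt_of_ne hk)
    simpa using (Real.tendsto_exp_atBot.comp (tendsto_id.atTop_mul_const_of_neg hneg)).mul_const
      (hA.eigenvectorBasis k i ^ 2)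

theorem dotProduct_eigenvectorBasis (k l : n) :
    ⇑(hA.eigenvectorBasis k) ⬝ᵥ ⇑(hA.eigenvectorBasis l) = if k = l then 1 else 0 := by
  rw [← hA.eigenvectorBasis.inner_eq_ite, EuclideanSpace.inner_eq_star_dotProduct, star_trivial,
    dotProduct_comm]

theorem exists_eigenvalues_eq_of_mulVec_eq_smul {lam : ℝ} {p : n → ℝ} (hp : A *ᵥ p = lam • p)
    (hp0 : p ≠ 0) : ∃ k, hA.eigenvalues k = lam := by
  rw [← Set.mem_range, ← hA.spectrum_real_eq_range_eigenvalues, ← spectrum_toLin',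
    ← Module.End.hasEigenvalue_iff_mem_spectrum]
  exact Module.End.hasEigenvalue_of_hasEigenvector
    ⟨Module.End.mem_eigenspace_iff.2 (by simpa using hp), hp0⟩

theorem sum_sq_eigenvectorBasis_eq_sq_of_forall_eq_smul {lam : ℝ} {p : n → ℝ}
    (hp : A *ᵥ p = lam • p) (hp1 : p ⬝ᵥ p = 1)
    (huniq : ∀ w, A *ᵥ w = lam • w → ∃ c : ℝ, w = c • p) (i : n) :
    ∑ k with hA.eigenvalues k = lam, hA.eigenvectorBasis k i ^ 2 = p i ^ 2 := by
  have hunit (k : n) (hk : hA.eigenvalues k = lam) :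
      ∃ c : ℝ, c ^ 2 = 1 ∧ ⇑(hA.eigenvectorBasis k) = c • p := by
    obtain ⟨c, hc⟩ := huniq _ (by rw [hA.mulVec_eigenvectorBasis, hk])
    refine ⟨c, ?_, hc⟩
    have := hA.dotProduct_eigenvectorBasis k k
    rw [hc] at this
    simpa [hp1, sq] using this
  obtain ⟨k₀, hk₀⟩ := hA.exists_eigenvalues_eq_of_mulVec_eq_smul hp
    (by rintro rfl; simp at hp1)
  obtain ⟨c₀, hc₀1, hc₀⟩ := hunit k₀ hk₀
  rw [Finset.sum_eq_single_of_mem k₀ (by simpa using hk₀), hc₀, Pi.smul_apply, smul_eq_mul,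
    mul_pow, hc₀1, one_mul]
  intro k hk hne
  obtain ⟨c, hc1, hc⟩ := hunit k (Finset.mem_filter.1 hk).2
  have horth := hA.dotProduct_eigenvectorBasis k k₀
  rw [if_neg hne, hc, hc₀, smul_dotProduct, dotProduct_smul, hp1] at horth
  simp only [smul_eq_mul, mul_one] at horth
  exact absurd (by rw [mul_pow, hc1, hc₀1, one_mul] : (c * c₀) ^ 2 = 1) (by simp [horth])

end Matrix.IsHermitian

theorem stmt11_general {N : ℕ} (G : SimpleGraph (Fin N)) [DecidableRel G.Adj]
    (hconn : G.Connected)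
    (lam : ℝ) (p₁ : Fin N → ℝ)
    (heig : G.adjMatrix ℝ *ᵥ p₁ = lam • p₁)
    (hpos : ∀ t, 0 < p₁ t)
    (hnorm : ∑ t, p₁ t ^ 2 = 1)
    (hmax : ∀ μ ∈ spectrum ℝ (G.adjMatrix ℝ), |μ| ≤ lam)
    (i j : Fin N) (hij : p₁ j < p₁ i) :
    ∃ B > 0, ∀ β : ℝ, B < β →
      (NormedSpace.exp (β • G.adjMatrix ℝ)) j j <
      (NormedSpace.exp (β • G.adjMatrix ℝ)) i i := by
  have hA : (G.adjMatrix ℝ).IsHermitian := G.isHermitian_adjMatrix ℝ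
  have hle (k : Fin N) : hA.eigenvalues k ≤ lam :=
    (le_abs_self _).trans (hmax _ (hA.eigenvalues_mem_spectrum_real k))
  have hweight (t : Fin N) :
      ∑ k with hA.eigenvalues k = lam, hA.eigenvectorBasis k t ^ 2 = p₁ t ^ 2 :=
    hA.sum_sq_eigenvectorBasis_eq_sq_of_forall_eq_smul heig (by simpa [dotProduct, sq] using hnorm)
      (fun _ hw => hconn.exists_eq_smul_of_adjMatrix_mulVec_eq_smul heig hpos hw) t
  have hlim : Tendsto (fun β : ℝ => Real.exp (-(β * lam)) *
      (NormedSpace.exp (β • G.adjMatrix ℝ) i i - NormedSpace.exp (β • G.adjMatrix ℝ) j j))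
      atTop (𝓝 (p₁ i ^ 2 - p₁ j ^ 2)) := by
    simpa only [mul_sub, hweight] using
      (hA.tendsto_exp_neg_mul_exp_smul_apply_self hle i).sub
        (hA.tendsto_exp_neg_mul_exp_smul_apply_self hle j)
  have hgap : 0 < p₁ i ^ 2 - p₁ j ^ 2 :=
    sub_pos.2 (pow_lt_pow_left₀ hij (hpos j).le two_ne_zero)
  obtain ⟨B, hB⟩ := eventually_atTop.1 (hlim.eventually_const_lt hgap)
  refine ⟨max B 1, by positivity, fun β hβ => ?_⟩
  have hdiff := hB β (le_of_max_le_left hβ.le)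
  exact sub_pos.1 (pos_of_mul_pos_right hdiff (Real.exp_pos _).le)

/-- As β → ∞ the subgraph centrality ranking tends to the eigenvector centrality
ranking: for a connected graph with Perron eigenvector p₁ (entrywise positive unit
eigenvector of the largest eigenvalue λ₁, which equals the spectral radius), if
p₁(i) > p₁(j) then for all large enough β one has [e^{βA}]_{ii} > [e^{βA}]_{jj}. -/
theorem stmt11 {N : ℕ} (hN : 2 ≤ N) (G : SimpleGraph (Fin N)) [DecidableRel G.Adj]
    (hconn : G.Connected)
    (lam : ℝ) (p₁ : Fin N → ℝ)
    (heig : G.adjMatrix ℝ *ᵥ p₁ = lam • p₁)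
    (hpos : ∀ t, 0 < p₁ t)
    (hnorm : ∑ t, p₁ t ^ 2 = 1)
    (hmax : ∀ μ ∈ spectrum ℝ (G.adjMatrix ℝ), |μ| ≤ lam)
    (i j : Fin N) (hij : p₁ j < p₁ i) :
    ∃ B > 0, ∀ β : ℝ, B < β →
      (NormedSpace.exp (β • G.adjMatrix ℝ)) j j <
      (NormedSpace.exp (β • G.adjMatrix ℝ)) i i :=
  stmt11_general G hconn lam p₁ heig hpos hnorm hmax i j hij
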